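/- arXiv:2504.18455 — 5 statements merged into one kernel-verified Lean document; each statement's English description precedes it below -/
import Mathlib

section
/- For x1, x2 in [0,1], the function h_D(x1,x2) := 2 h_b((x1+x2)/2) - h_b(x1) - h_b(x2), where h_b is the binary entropy function h_b(x) = -x log2 x - (1-x) log2 (1-x), satisfies h_D(x1, x2) ≥ (x1 - x2)^2. -/
/-- Binary entropy function (base 2), with the convention `0 log 0 = 0`. -/
noncomputable def hb (x : ℝ) : ℝ := -(x * Real.logb 2 x) - (1 - x) * Real.logb 2 (1 - x)

/-- The function `h_D`. -/
noncomputable def hD (x1 x2 : ℝ) : ℝ := 2 * hb ((x1 + x2) / 2) - hb x1 - hb x2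

/-!
In nats, `binEntropy'' x = -1 / (x (1 - x)) ≤ -4` on `(0, 1)`, so `binEntropy x + 2 x²` is concave
on `[0, 1]`. Midpoint concavity of that function is exactly `(x₁ - x₂)² ≤ h_D(x₁, x₂) · log 2`,
and dividing the (nonnegative) gap by `log 2 ≤ 1` only makes it larger.
-/

open Real Set

lemma sq_sub_le_midpoint_gap_of_concaveOn_add_sq {s : Set ℝ} {f : ℝ → ℝ} {c : ℝ}
    (hf : ConcaveOn ℝ s fun x ↦ f x + c * x ^ 2) {a b : ℝ} (ha : a ∈ s) (hb : b ∈ s) :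
    c / 2 * (a - b) ^ 2 ≤ 2 * f ((a + b) / 2) - f a - f b := by
  have hmid := hf.2 ha hb (by norm_num : (0 : ℝ) ≤ 1 / 2) (by norm_num : (0 : ℝ) ≤ 1 / 2)
    (by norm_num)
  simp only [smul_eq_mul] at hmid
  rw [show 1 / 2 * a + 1 / 2 * b = (a + b) / 2 by ring] at hmid
  linarith

lemma hasDerivAt_log_one_sub_sub_log {x : ℝ} (hx₀ : x ≠ 0) (hx₁ : x ≠ 1) :
    HasDerivAt (fun y ↦ log (1 - y) - log y) (-(1 - x)⁻¹ - x⁻¹) x := by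
  have hsub : HasDerivAt (fun y ↦ log (1 - y)) (-(1 - x)⁻¹) x := by
    simpa [neg_div] using ((hasDerivAt_id' x).const_sub 1).log (sub_ne_zero.2 hx₁.symm)
  exact hsub.sub (hasDerivAt_log hx₀)

lemma concaveOn_binEntropy_add_two_mul_sq :
    ConcaveOn ℝ (Icc 0 1) fun x ↦ binEntropy x + 2 * x ^ 2 := by
  refine concaveOn_of_hasDerivWithinAt2_nonpos (f' := fun x ↦ log (1 - x) - log x + 4 * x)
    (f'' := fun x ↦ -(1 - x)⁻¹ - x⁻¹ + 4) (convex_Icc 0 1) (by fun_prop) ?_ ?_ ?_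
    <;> rw [interior_Icc] <;> rintro x ⟨hx₀, hx₁⟩
  · refine HasDerivAt.hasDerivWithinAt ?_
    convert (hasDerivAt_binEntropy hx₀.ne' hx₁.ne).fun_add ((hasDerivAt_pow 2 x).const_mul 2)
      using 1
    norm_num
    ring
  · refine HasDerivAt.hasDerivWithinAt ?_
    simpa using (hasDerivAt_log_one_sub_sub_log hx₀.ne' hx₁.ne).fun_add
      ((hasDerivAt_id x).const_mul 4)
  · have hx₁' : 0 < 1 - x := sub_pos.2 hx₁
    -- `1 / x + 1 / (1 - x) = 1 / (x (1 - x)) ≥ 4` by AM-GM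
    have : 4 ≤ x⁻¹ + (1 - x)⁻¹ := by
      rw [inv_add_inv hx₀.ne' hx₁'.ne', le_div_iff₀ (by positivity)]
      nlinarith [sq_nonneg (2 * x - 1)]
    linarith

lemma hD_eq_div_log_two (x1 x2 : ℝ) :
    hD x1 x2 = (2 * binEntropy ((x1 + x2) / 2) - binEntropy x1 - binEntropy x2) / log 2 := by
  have hb_eq (x : ℝ) : hb x = binEntropy x / log 2 := by
    simp only [hb, binEntropy, logb, log_inv]
    ring
  simp only [hD, hb_eq]
  ring

theorem hD_ge_sq_diff (x1 x2 : ℝ) (hx1 : x1 ∈ Set.Icc (0:ℝ) 1)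
    (hx2 : x2 ∈ Set.Icc (0:ℝ) 1) : hD x1 x2 ≥ (x1 - x2) ^ 2 := by
  have hgap := sq_sub_le_midpoint_gap_of_concaveOn_add_sq
    concaveOn_binEntropy_add_two_mul_sq hx1 hx2
  rw [div_self two_ne_zero, one_mul] at hgap
  have hlog_two : log 2 ≤ 1 := by linarith [log_le_sub_one_of_pos two_pos]
  rw [hD_eq_div_log_two, ge_iff_le]
  exact hgap.trans (le_div_self ((sq_nonneg _).trans hgap) (log_pos one_lt_two) hlog_two)
end

section
/- For x1 in [0,1], the function h_D(x1, 0) := 2 h_b(x1/2) - h_b(x1) satisfies h_D(x1, 0) ≥ x1. -/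
/-!
With `u = 1 - x₁`, unfolding the definitions reduces the claim to
`(1 + u) logb₂ ((1 + u) / 2) ≤ u logb₂ u`, which is midpoint convexity of `t ↦ t log t`
at the points `u` and `1`.
-/

open Real

lemma mul_logb_two_div_two (x : ℝ) : x * logb 2 (x / 2) = x * logb 2 x - x := by
  rcases eq_or_ne x 0 with rfl | hx
  · simp
  · rw [logb_div hx two_ne_zero, logb_self_eq_one one_lt_two]
    ring

lemma add_mul_logb_two_midpoint_le {a b : ℝ} (ha : 0 ≤ a) (hb' : 0 ≤ b) :
    (a + b) * logb 2 ((a + b) / 2) ≤ a * logb 2 a + b * logb 2 b := by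
  have hconv := convexOn_mul_log.2 (Set.mem_Ici.2 ha) (Set.mem_Ici.2 hb')
    (by norm_num : (0 : ℝ) ≤ 1 / 2) (by norm_num : (0 : ℝ) ≤ 1 / 2) (by norm_num)
  simp only [smul_eq_mul] at hconv
  have hmid : 1 / 2 * a + 1 / 2 * b = (a + b) / 2 := by ring
  rw [hmid] at hconv
  simp only [logb, ← mul_div_assoc, ← add_div]
  exact div_le_div_of_nonneg_right (by linarith) (log_pos one_lt_two).le

lemma two_mul_hb_half (x : ℝ) :
    2 * hb (x / 2) = 2 - x * logb 2 x - (2 - x) * logb 2 (2 - x) := by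
  rw [hb, show 1 - x / 2 = (2 - x) / 2 by ring]
  linear_combination -mul_logb_two_div_two x - mul_logb_two_div_two (2 - x)

lemma hb_zero : hb 0 = 0 := by
  simp [hb]

theorem hD_zero_ge_self (x1 : ℝ) (hx1 : x1 ∈ Set.Icc (0:ℝ) 1) : hD x1 0 ≥ x1 := by
  have hconv := add_mul_logb_two_midpoint_le (sub_nonneg.2 hx1.2) zero_le_one
  rw [show 1 - x1 + 1 = 2 - x1 by ring, mul_logb_two_div_two, logb_one, mul_zero,
    add_zero] at hconv
  rw [hD, add_zero, hb_zero, two_mul_hb_half, hb]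
  linarith
end

section
/- The function h_D(x1,x2) := 2 h_b((x1+x2)/2) - h_b(x1) - h_b(x2) is jointly convex on [0,1]×[0,1]; in particular, it is convex in x1 for each fixed x2 and convex in x2 for each fixed x1. -/
open Real Set

theorem ConvexCone.convexOn_of_map_smul_of_map_add_le {𝕜 E β : Type*} [Semiring 𝕜]
    [PartialOrder 𝕜] [AddCommMonoid E] [Module 𝕜 E] [AddCommMonoid β] [PartialOrder β]
    [Module 𝕜 β] (C : ConvexCone 𝕜 E) {f : E → β}
    (hsmul : ∀ x ∈ C, ∀ ⦃t : 𝕜⦄, 0 < t → f (t • x) = t • f x)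
    (hadd : ∀ x ∈ C, ∀ y ∈ C, f (x + y) ≤ f x + f y) : ConvexOn 𝕜 C f := by
  refine convexOn_iff_forall_pos.2 ⟨C.convex, fun x hx y hy a b ha hb _ => ?_⟩
  calc f (a • x + b • y) ≤ f (a • x) + f (b • y) :=
        hadd (a • x) (C.smul_mem ha hx) (b • y) (C.smul_mem hb hy)
    _ = a • f x + b • f y := by rw [hsmul x hx ha, hsmul y hy hb]

/-- `p log (p / q)`, written without division so that `log_two_mul_hD` needs no side conditions. -/
noncomputable def relEntr (p q : ℝ) : ℝ := p * (log p - log q)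

lemma relEntr_eq_mul_mul_log_div {q : ℝ} (p : ℝ) (hq : q ≠ 0) :
    relEntr p q = q * (p / q * log (p / q)) := by
  rcases eq_or_ne p 0 with rfl | hp
  · simp [relEntr]
  rw [log_div hp hq, relEntr]
  field_simp

/-- The log-sum inequality: Jensen for `x ↦ x log x` at the points `pᵢ / qᵢ` with weights
`qᵢ / (q₁ + q₂)`. -/
theorem relEntr_add_le {p₁ p₂ q₁ q₂ : ℝ} (hp₁ : 0 ≤ p₁) (hp₂ : 0 ≤ p₂) (hq₁ : 0 < q₁)
    (hq₂ : 0 < q₂) : relEntr (p₁ + p₂) (q₁ + q₂) ≤ relEntr p₁ q₁ + relEntr p₂ q₂ := by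
  have hq : 0 < q₁ + q₂ := add_pos hq₁ hq₂
  have jensen := convexOn_mul_log.2 (mem_Ici.2 (div_nonneg hp₁ hq₁.le))
    (mem_Ici.2 (div_nonneg hp₂ hq₂.le)) (div_nonneg hq₁.le hq.le) (div_nonneg hq₂.le hq.le)
    (by field_simp)
  have hmean :
      q₁ / (q₁ + q₂) * (p₁ / q₁) + q₂ / (q₁ + q₂) * (p₂ / q₂) = (p₁ + p₂) / (q₁ + q₂) := by
    field_simp
  simp only [smul_eq_mul, hmean] at jensen
  rw [relEntr_eq_mul_mul_log_div _ hq.ne', relEntr_eq_mul_mul_log_div _ hq₁.ne',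
    relEntr_eq_mul_mul_log_div _ hq₂.ne']
  calc _ ≤ (q₁ + q₂) * (q₁ / (q₁ + q₂) * (p₁ / q₁ * log (p₁ / q₁)) +
        q₂ / (q₁ + q₂) * (p₂ / q₂ * log (p₂ / q₂))) := mul_le_mul_of_nonneg_left jensen hq.le
    _ = _ := by field_simp

/-- The effective domain of relative entropy. Off it, Lean's `log 0 = 0` makes `relEntr p 0` finite
and subadditivity fails. -/
def relEntrCone : ConvexCone ℝ (ℝ × ℝ) where
  carrier := {z | 0 ≤ z.1 ∧ 0 ≤ z.2 ∧ (z.2 = 0 → z.1 = 0)}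
  smul_mem' t ht z := by
    rintro ⟨hp, hq, hqp⟩
    refine ⟨mul_nonneg ht.le hp, mul_nonneg ht.le hq, fun h => ?_⟩
    simp_all [ht.ne']
  add_mem' z hz w hw := by
    obtain ⟨hp, hq, hqp⟩ := hz
    obtain ⟨hp', hq', hqp'⟩ := hw
    refine ⟨add_nonneg hp hp', add_nonneg hq hq', fun h => ?_⟩
    simp only [Prod.fst_add, Prod.snd_add] at h ⊢
    rw [hqp (by linarith), hqp' (by linarith), add_zero]

lemma mk_mem_relEntrCone {p q : ℝ} :
    (p, q) ∈ relEntrCone ↔ 0 ≤ p ∧ 0 ≤ q ∧ (q = 0 → p = 0) := Iff.rfl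

lemma relEntr_mul_mul {p q : ℝ} (t : ℝ) (hq : q = 0 → p = 0) :
    relEntr (t * p) (t * q) = t * relEntr p q := by
  rcases eq_or_ne t 0 with rfl | ht
  · simp [relEntr]
  rcases eq_or_ne q 0 with rfl | hq'
  · simp [relEntr, hq rfl]
  rw [relEntr_eq_mul_mul_log_div _ (mul_ne_zero ht hq'), relEntr_eq_mul_mul_log_div _ hq',
    mul_div_mul_left _ _ ht, mul_assoc]

lemma relEntr_add_le_of_mem_relEntrCone {z w : ℝ × ℝ} (hz : z ∈ relEntrCone)
    (hw : w ∈ relEntrCone) :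
    relEntr (z.1 + w.1) (z.2 + w.2) ≤ relEntr z.1 z.2 + relEntr w.1 w.2 := by
  obtain ⟨hp, hq, hqp⟩ := hz
  obtain ⟨hp', hq', hqp'⟩ := hw
  rcases hq.eq_or_lt with h | h
  · simp [relEntr, hqp h.symm, ← h]
  rcases hq'.eq_or_lt with h' | h'
  · simp [relEntr, hqp' h'.symm, ← h']
  exact relEntr_add_le hp hp' h h'

/-- `jsTerm p q + jsTerm (1 - p) (1 - q)` is twice the Jensen–Shannon divergence (in nats) of the
Bernoulli laws with parameters `p` and `q`. -/
noncomputable def jsTerm (p q : ℝ) : ℝ := relEntr p ((p + q) / 2) + relEntr q ((p + q) / 2)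

theorem convexOn_jsTerm : ConvexOn ℝ (Ici (0 : ℝ × ℝ)) (fun z => jsTerm z.1 z.2) := by
  have hmem {z : ℝ × ℝ} (hz : 0 ≤ z) :
      (z.1, (z.1 + z.2) / 2) ∈ relEntrCone ∧ (z.2, (z.1 + z.2) / 2) ∈ relEntrCone := by
    obtain ⟨h₁, h₂⟩ : 0 ≤ z.1 ∧ 0 ≤ z.2 := hz
    rw [mk_mem_relEntrCone, mk_mem_relEntrCone]
    exact ⟨⟨h₁, by linarith, fun _ => by linarith⟩, h₂, by linarith, fun _ => by linarith⟩
  refine (ConvexCone.positive ℝ (ℝ × ℝ)).convexOn_of_map_smul_of_map_add_le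
    (fun z hz t ht => ?_) fun z hz w hw => ?_
  · have hmid : (t * z.1 + t * z.2) / 2 = t * ((z.1 + z.2) / 2) := by ring
    change jsTerm (t * z.1) (t * z.2) = t * jsTerm z.1 z.2
    rw [jsTerm, jsTerm, hmid, relEntr_mul_mul t (hmem hz).1.2.2,
      relEntr_mul_mul t (hmem hz).2.2.2, mul_add]
  · have hmid : (z.1 + w.1 + (z.2 + w.2)) / 2 = (z.1 + z.2) / 2 + (w.1 + w.2) / 2 := by ring
    change jsTerm (z.1 + w.1) (z.2 + w.2) ≤ jsTerm z.1 z.2 + jsTerm w.1 w.2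
    rw [jsTerm, jsTerm, jsTerm, hmid]
    linarith [relEntr_add_le_of_mem_relEntrCone (hmem hz).1 (hmem hw).1,
      relEntr_add_le_of_mem_relEntrCone (hmem hz).2 (hmem hw).2]

lemma log_two_mul_hD (x₁ x₂ : ℝ) :
    log 2 * hD x₁ x₂ = jsTerm x₁ x₂ + jsTerm (1 - x₁) (1 - x₂) := by
  have hmid : (1 - x₁ + (1 - x₂)) / 2 = 1 - (x₁ + x₂) / 2 := by ring
  have h2 : log 2 ≠ 0 := (log_pos one_lt_two).ne'
  simp only [hD, hb, jsTerm, relEntr, logb, hmid]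
  field_simp
  ring

section Slices

variable {𝕜 E F β : Type*} [Semiring 𝕜] [PartialOrder 𝕜] [AddCommMonoid E] [AddCommMonoid F]
  [Module 𝕜 E] [Module 𝕜 F] [AddCommMonoid β] [PartialOrder β] [SMul 𝕜 β]
  {s : Set E} {t : Set F} {f : E × F → β}

theorem ConvexOn.comp_prodMk_left (hf : ConvexOn 𝕜 (s ×ˢ t) f) {y : F} (hy : y ∈ t) :
    ConvexOn 𝕜 s (fun x => f (x, y)) := by
  have hcombo {x x' : E} {a b : 𝕜} (hab : a + b = 1) :
      a • (x, y) + b • (x', y) = (a • x + b • x', y) := by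
    rw [Prod.smul_mk, Prod.smul_mk, Prod.mk_add_mk, Convex.combo_self hab]
  refine ⟨fun x hx x' hx' a b ha hb hab => ?_, fun x hx x' hx' a b ha hb hab => ?_⟩
  · have := hf.1 (mk_mem_prod hx hy) (mk_mem_prod hx' hy) ha hb hab
    rw [hcombo hab] at this
    exact this.1
  · have := hf.2 (mk_mem_prod hx hy) (mk_mem_prod hx' hy) ha hb hab
    rwa [hcombo hab] at this

theorem ConvexOn.comp_prodMk_right (hf : ConvexOn 𝕜 (s ×ˢ t) f) {x : E} (hx : x ∈ s) :
    ConvexOn 𝕜 t (fun y => f (x, y)) := by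
  have hcombo {y y' : F} {a b : 𝕜} (hab : a + b = 1) :
      a • (x, y) + b • (x, y') = (x, a • y + b • y') := by
    rw [Prod.smul_mk, Prod.smul_mk, Prod.mk_add_mk, Convex.combo_self hab]
  refine ⟨fun y hy y' hy' a b ha hb hab => ?_, fun y hy y' hy' a b ha hb hab => ?_⟩
  · have := hf.1 (mk_mem_prod hx hy) (mk_mem_prod hx hy') ha hb hab
    rw [hcombo hab] at this
    exact this.2
  · have := hf.2 (mk_mem_prod hx hy) (mk_mem_prod hx hy') ha hb hab
    rwa [hcombo hab] at this

end Slices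

theorem hD_convex :
    ConvexOn ℝ (Set.Icc (0:ℝ) 1 ×ˢ Set.Icc (0:ℝ) 1) (fun p : ℝ × ℝ => hD p.1 p.2) ∧
    (∀ x2 ∈ Set.Icc (0:ℝ) 1, ConvexOn ℝ (Set.Icc (0:ℝ) 1) (fun x1 => hD x1 x2)) ∧
    (∀ x1 ∈ Set.Icc (0:ℝ) 1, ConvexOn ℝ (Set.Icc (0:ℝ) 1) (fun x2 => hD x1 x2)) := by
  set square : Set (ℝ × ℝ) := Icc 0 1 ×ˢ Icc 0 1
  have hsquare : Convex ℝ square := (convex_Icc 0 1).prod (convex_Icc 0 1)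
  have hreflect := convexOn_jsTerm.comp_affineMap
    (AffineMap.const ℝ (ℝ × ℝ) (1, 1) - AffineMap.id ℝ (ℝ × ℝ))
  have hsum : ConvexOn ℝ square (fun z => jsTerm z.1 z.2 + jsTerm (1 - z.1) (1 - z.2)) := by
    refine (convexOn_jsTerm.subset ?_ hsquare).add (hreflect.subset ?_ hsquare)
    · rintro z ⟨⟨h₁, -⟩, h₂, -⟩
      exact ⟨h₁, h₂⟩
    · rintro z ⟨⟨-, h₁⟩, -, h₂⟩
      exact ⟨sub_nonneg.2 h₁, sub_nonneg.2 h₂⟩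
  have joint : ConvexOn ℝ square (fun z => hD z.1 z.2) :=
    (hsum.smul (inv_nonneg.2 (log_nonneg one_le_two))).congr fun z _ => by
      simp [← log_two_mul_hD, (log_pos one_lt_two).ne']
  exact ⟨joint, fun _ hx₂ => joint.comp_prodMk_left hx₂, fun _ hx₁ => joint.comp_prodMk_right hx₁⟩
end

section
/- For fixed x2 ∈ [0,1], the map x ↦ h_D(x, x2) is monotonically decreasing on [0, x2] and monotonically increasing on [x2, 1]. -/
/-!
Up to the constant `hb x2`, `hD x x2` is `g x = 2 * hb ((x + x2) / 2) - hb x`, and `hb` is a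
positive multiple of `Real.binEntropy`, hence concave on `[0, 1]`. For `x < y`,
`g y - g x = (y - x) * (σ' - σ)`, where `σ` is the secant slope of `hb` over `[x, y]` and `σ'` the
one over `[(x + x2) / 2, (y + x2) / 2]` (the factor 2 compensates the halved length). Secant slopes of
a concave function decrease as both endpoints move right, and the second interval lies to the right
of `[x, y]` when `y ≤ x2`, to the left when `x2 ≤ x`.
-/

open Set

section Slope

variable {𝕜 : Type*} [Field 𝕜] [LinearOrder 𝕜] [IsStrictOrderedRing 𝕜] {s : Set 𝕜} {f : 𝕜 → 𝕜}

theorem ConcaveOn.slope_le_slope_of_le (hf : ConcaveOn 𝕜 s f) {a b a' b' : 𝕜}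
    (ha : a ∈ s) (hb : b ∈ s) (ha' : a' ∈ s) (hb' : b' ∈ s)
    (hab : a < b) (hab' : a' < b') (haa' : a ≤ a') (hbb' : b ≤ b') :
    slope f a' b' ≤ slope f a b :=
  calc slope f a' b' = slope f b' a' := slope_comm f a' b'
    _ ≤ slope f b' a := hf.slope_anti hb' ⟨ha, (hab.trans_le hbb').ne⟩ ⟨ha', hab'.ne⟩ haa'
    _ = slope f a b' := slope_comm f b' a
    _ ≤ slope f a b := hf.slope_anti ha ⟨hb, hab.ne'⟩ ⟨hb', (hab.trans_le hbb').ne'⟩ hbb'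

theorem two_mul_apply_avg_sub_apply_sub (f : 𝕜 → 𝕜) (c : 𝕜) {x y : 𝕜} (hxy : x ≠ y) :
    (2 * f ((y + c) / 2) - f y) - (2 * f ((x + c) / 2) - f x)
      = (y - x) * (slope f ((x + c) / 2) ((y + c) / 2) - slope f x y) := by
  have hyx : y - x ≠ 0 := sub_ne_zero.2 hxy.symm
  have hmid : (y + c) / 2 - (x + c) / 2 = (y - x) / 2 := by ring
  simp only [slope_def_field, hmid]
  field_simp
  ring

theorem Convex.avg_mem (hs : Convex 𝕜 s) {x c : 𝕜} (hx : x ∈ s) (hc : c ∈ s) :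
    (x + c) / 2 ∈ s := by
  simpa [midpoint_eq_smul_add, div_eq_inv_mul] using hs.midpoint_mem hx hc

theorem ConcaveOn.antitoneOn_two_mul_apply_avg_sub_apply (hf : ConcaveOn 𝕜 s f) {c : 𝕜}
    (hc : c ∈ s) : AntitoneOn (fun x => 2 * f ((x + c) / 2) - f x) (s ∩ Iic c) := by
  rintro x ⟨hxs, hxc : x ≤ c⟩ y ⟨hys, hyc : y ≤ c⟩ hxy
  rcases hxy.eq_or_lt with rfl | hxy
  · rfl
  have hslope : slope f ((x + c) / 2) ((y + c) / 2) ≤ slope f x y :=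
    hf.slope_le_slope_of_le hxs hys (hf.1.avg_mem hxs hc) (hf.1.avg_mem hys hc) hxy
      (by linarith) (by linarith) (by linarith)
  refine sub_nonpos.1 ?_
  rw [two_mul_apply_avg_sub_apply_sub f c hxy.ne]
  exact mul_nonpos_of_nonneg_of_nonpos (sub_nonneg.2 hxy.le) (sub_nonpos.2 hslope)

theorem ConcaveOn.monotoneOn_two_mul_apply_avg_sub_apply (hf : ConcaveOn 𝕜 s f) {c : 𝕜}
    (hc : c ∈ s) : MonotoneOn (fun x => 2 * f ((x + c) / 2) - f x) (s ∩ Ici c) := by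
  rintro x ⟨hxs, hcx : c ≤ x⟩ y ⟨hys, hcy : c ≤ y⟩ hxy
  rcases hxy.eq_or_lt with rfl | hxy
  · rfl
  have hslope : slope f x y ≤ slope f ((x + c) / 2) ((y + c) / 2) :=
    hf.slope_le_slope_of_le (hf.1.avg_mem hxs hc) (hf.1.avg_mem hys hc) hxs hys
      (by linarith) hxy (by linarith) (by linarith)
  refine sub_nonneg.1 ?_
  rw [two_mul_apply_avg_sub_apply_sub f c hxy.ne]
  exact mul_nonneg (sub_nonneg.2 hxy.le) (sub_nonneg.2 hslope)

end Slope

theorem hb_eq_inv_log_two_smul_binEntropy : hb = (Real.log 2)⁻¹ • Real.binEntropy := by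
  funext x
  simp only [hb, Pi.smul_apply, smul_eq_mul, Real.binEntropy, Real.logb, Real.log_inv]
  ring

theorem concaveOn_hb : ConcaveOn ℝ (Icc 0 1) hb :=
  hb_eq_inv_log_two_smul_binEntropy ▸
    Real.strictConcave_binEntropy.concaveOn.smul (inv_nonneg.2 (Real.log_nonneg one_le_two))

theorem hD_antitone_monotone (x2 : ℝ) (hx2 : x2 ∈ Set.Icc (0:ℝ) 1) :
    AntitoneOn (fun x => hD x x2) (Set.Icc 0 x2) ∧
    MonotoneOn (fun x => hD x x2) (Set.Icc x2 1) := by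
  have hanti := concaveOn_hb.antitoneOn_two_mul_apply_avg_sub_apply hx2
  have hmono := concaveOn_hb.monotoneOn_two_mul_apply_avg_sub_apply hx2
  refine ⟨fun x hx y hy hxy => ?_, fun x hx y hy hxy => ?_⟩
  · have := hanti ⟨⟨hx.1, hx.2.trans hx2.2⟩, hx.2⟩ ⟨⟨hy.1, hy.2.trans hx2.2⟩, hy.2⟩ hxy
    simp only [hD]
    linarith
  · have := hmono ⟨⟨hx2.1.trans hx.1, hx.2⟩, hx.1⟩ ⟨⟨hx2.1.trans hy.1, hy.2⟩, hy.1⟩ hxy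
    simp only [hD]
    linarith
end

section
/- Under the Markov chain U_1 ↔ X_1 ↔ Y ↔ X_2 ↔ U_2, the identity I(U_1;X_1|Y) + I(U_2;X_2|Y) + I(U_1,U_2;Y) = I(U_1;X_1) + I(U_2;X_2) − I(U_1;U_2) holds. -/
open Finset

/-- Shannon mutual information `I(A;B)` of a joint pmf `q` on `A × B`
(natural log, convention `0 log 0 = 0` via `Real.log 0 = 0`). -/
noncomputable def mi2 {A B : Type*} [Fintype A] [Fintype B] (q : A → B → ℝ) : ℝ :=
  ∑ a, ∑ b, q a b * Real.log (q a b / ((∑ b', q a b') * (∑ a', q a' b)))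

/-- Conditional mutual information `I(A;B|C)` of a joint pmf `r` on `A × B × C`. -/
noncomputable def cmi {A B C : Type*} [Fintype A] [Fintype B] [Fintype C]
    (r : A → B → C → ℝ) : ℝ :=
  ∑ a, ∑ b, ∑ c, r a b c * Real.log
    ((∑ a', ∑ b', r a' b' c) * r a b c / ((∑ b', r a b' c) * (∑ a', r a' b c)))

section
variable {α β γ δ : Type*} [Fintype α] [Fintype β] [Fintype γ] [Fintype δ]
variable {M : Type*} [AddCommMonoid M]

lemma sw3_01 (f : α → β → γ → M) :
    ∑ a, ∑ b, ∑ c, f a b c = ∑ b, ∑ a, ∑ c, f a b c := Finset.sum_comm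

lemma sw3_12 (f : α → β → γ → M) :
    ∑ a, ∑ b, ∑ c, f a b c = ∑ a, ∑ c, ∑ b, f a b c :=
  Finset.sum_congr rfl fun _ _ => Finset.sum_comm

lemma rot3 (f : α → β → γ → M) :
    ∑ a, ∑ b, ∑ c, f a b c = ∑ b, ∑ c, ∑ a, f a b c :=
  Finset.sum_comm.trans (Finset.sum_congr rfl fun _ _ => Finset.sum_comm)

lemma rot3inv (f : α → β → γ → M) :
    ∑ a, ∑ b, ∑ c, f a b c = ∑ c, ∑ a, ∑ b, f a b c :=
  (rot3 (fun c a b => f a b c)).symm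

lemma sw4_01 (f : α → β → γ → δ → M) :
    ∑ a, ∑ b, ∑ c, ∑ d, f a b c d = ∑ b, ∑ a, ∑ c, ∑ d, f a b c d := Finset.sum_comm

lemma sw4_12 (f : α → β → γ → δ → M) :
    ∑ a, ∑ b, ∑ c, ∑ d, f a b c d = ∑ a, ∑ c, ∑ b, ∑ d, f a b c d :=
  Finset.sum_congr rfl fun _ _ => Finset.sum_comm

lemma sw4_23 (f : α → β → γ → δ → M) :
    ∑ a, ∑ b, ∑ c, ∑ d, f a b c d = ∑ a, ∑ b, ∑ d, ∑ c, f a b c d :=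
  Finset.sum_congr rfl fun _ _ => Finset.sum_congr rfl fun _ _ => Finset.sum_comm

lemma rot4 (f : α → β → γ → δ → M) :
    ∑ a, ∑ b, ∑ c, ∑ d, f a b c d = ∑ b, ∑ c, ∑ d, ∑ a, f a b c d :=
  Finset.sum_comm.trans (Finset.sum_congr rfl fun _ _ => rot3 _)

-- (a,b,c,d) → (c,d,b,a)
lemma perm4A (f : α → β → γ → δ → M) :
    ∑ a, ∑ b, ∑ c, ∑ d, f a b c d = ∑ c, ∑ d, ∑ b, ∑ a, f a b c d := by
  rw [sw4_12, sw4_01, sw4_23, sw4_12, sw4_23]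

-- (a,b,c,d) → (c,a,d,b)
lemma perm4B (f : α → β → γ → δ → M) :
    ∑ a, ∑ b, ∑ c, ∑ d, f a b c d = ∑ c, ∑ a, ∑ d, ∑ b, f a b c d := by
  rw [sw4_12, sw4_01, sw4_23]

-- (a,b,c,d) → (d,b,a,c)
lemma perm4C (f : α → β → γ → δ → M) :
    ∑ a, ∑ b, ∑ c, ∑ d, f a b c d = ∑ d, ∑ b, ∑ a, ∑ c, f a b c d := by
  rw [sw4_23, sw4_12, sw4_01, sw4_12]

end

section
variable {α β γ δ : Type*} [Fintype α] [Fintype β] [Fintype γ] [Fintype δ]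

lemma le_sum2 (f : α → β → ℝ) (h0 : ∀ a b, 0 ≤ f a b) (a : α) (b : β) :
    f a b ≤ ∑ a', ∑ b', f a' b' := by
  calc f a b ≤ ∑ b', f a b' := Finset.single_le_sum (fun b' _ => h0 a b') (mem_univ b)
    _ ≤ ∑ a', ∑ b', f a' b' :=
      Finset.single_le_sum (fun a' _ => Finset.sum_nonneg fun b' _ => h0 a' b') (mem_univ a)

lemma le_sum3 (f : α → β → γ → ℝ) (h0 : ∀ a b c, 0 ≤ f a b c) (a : α) (b : β) (c : γ) :
    f a b c ≤ ∑ a', ∑ b', ∑ c', f a' b' c' := by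
  calc f a b c ≤ ∑ c', f a b c' := Finset.single_le_sum (fun c' _ => h0 a b c') (mem_univ c)
    _ ≤ ∑ a', ∑ b', ∑ c', f a' b' c' :=
      le_sum2 (fun a b => ∑ c', f a b c') (fun a b => Finset.sum_nonneg fun c' _ => h0 a b c') a b

lemma le_sum4 (f : α → β → γ → δ → ℝ) (h0 : ∀ a b c d, 0 ≤ f a b c d)
    (a : α) (b : β) (c : γ) (d : δ) :
    f a b c d ≤ ∑ a', ∑ b', ∑ c', ∑ d', f a' b' c' d' := by
  calc f a b c d ≤ ∑ d', f a b c d' := Finset.single_le_sum (fun d' _ => h0 a b c d') (mem_univ d)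
    _ ≤ ∑ a', ∑ b', ∑ c', ∑ d', f a' b' c' d' :=
      le_sum3 (fun a b c => ∑ d', f a b c d') (fun a b c => Finset.sum_nonneg fun d' _ => h0 a b c d') a b c

lemma exists_pos_of_sum2 (f : α → β → ℝ) (h0 : ∀ a b, 0 ≤ f a b)
    (h : 0 < ∑ a, ∑ b, f a b) : ∃ a b, 0 < f a b := by
  by_contra hc
  push_neg at hc
  have : ∑ a, ∑ b, f a b = 0 := Finset.sum_eq_zero fun a _ => Finset.sum_eq_zero fun b _ =>
    le_antisymm (hc a b) (h0 a b)
  simp [this] at h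

end

namespace DIB
variable {X1 U1 Y X2 U2 : Type*} [Fintype X1] [Fintype U1] [Fintype Y] [Fintype X2] [Fintype U2]
variable (p : X1 → U1 → Y → X2 → U2 → ℝ)

noncomputable def m1 (u1 : U1) (x1 : X1) (y : Y) : ℝ := ∑ x2, ∑ u2, p x1 u1 y x2 u2
noncomputable def m2 (u2 : U2) (x2 : X2) (y : Y) : ℝ := ∑ x1, ∑ u1, p x1 u1 y x2 u2
noncomputable def q12 (u1 : U1) (u2 : U2) (y : Y) : ℝ := ∑ x1, ∑ x2, p x1 u1 y x2 u2
noncomputable def pU1X1 (u1 : U1) (x1 : X1) : ℝ := ∑ y, ∑ x2, ∑ u2, p x1 u1 y x2 u2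
noncomputable def pU2X2 (u2 : U2) (x2 : X2) : ℝ := ∑ x1, ∑ u1, ∑ y, p x1 u1 y x2 u2
noncomputable def pU1U2 (u1 : U1) (u2 : U2) : ℝ := ∑ x1, ∑ y, ∑ x2, p x1 u1 y x2 u2
noncomputable def pX1 (x1 : X1) : ℝ := ∑ u1, ∑ y, ∑ x2, ∑ u2, p x1 u1 y x2 u2
noncomputable def pX2 (x2 : X2) : ℝ := ∑ x1, ∑ u1, ∑ y, ∑ u2, p x1 u1 y x2 u2
noncomputable def pY (y : Y) : ℝ := ∑ x1, ∑ u1, ∑ x2, ∑ u2, p x1 u1 y x2 u2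
noncomputable def pU1 (u1 : U1) : ℝ := ∑ x1, ∑ y, ∑ x2, ∑ u2, p x1 u1 y x2 u2
noncomputable def pU2 (u2 : U2) : ℝ := ∑ x2, ∑ x1, ∑ u1, ∑ y, p x1 u1 y x2 u2
noncomputable def pU1Y (u1 : U1) (y : Y) : ℝ := ∑ x1, ∑ x2, ∑ u2, p x1 u1 y x2 u2
noncomputable def pX1Y (x1 : X1) (y : Y) : ℝ := ∑ u1, ∑ x2, ∑ u2, p x1 u1 y x2 u2
noncomputable def pU2Y (u2 : U2) (y : Y) : ℝ := ∑ x1, ∑ u1, ∑ x2, p x1 u1 y x2 u2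
noncomputable def pX2Y (x2 : X2) (y : Y) : ℝ := ∑ x1, ∑ u1, ∑ u2, p x1 u1 y x2 u2


variable (hp0 : ∀ x1 u1 y x2 u2, 0 ≤ p x1 u1 y x2 u2)

section facts
variable (hM1 : ∀ x1 u1 y x2 u2,
      p x1 u1 y x2 u2 * (∑ u1', ∑ y', ∑ x2', ∑ u2', p x1 u1' y' x2' u2')
        = (∑ y', ∑ x2', ∑ u2', p x1 u1 y' x2' u2') * (∑ u1', p x1 u1' y x2 u2))
variable (hM2 : ∀ x1 u1 y x2 u2,
      p x1 u1 y x2 u2 * (∑ x1', ∑ u1', ∑ y', ∑ u2', p x1' u1' y' x2 u2')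
        = (∑ u2', p x1 u1 y x2 u2') * (∑ x1', ∑ u1', ∑ y', p x1' u1' y' x2 u2))
variable (hM3 : ∀ x1 y x2,
      (∑ u1, ∑ u2, p x1 u1 y x2 u2)
          * (∑ x1', ∑ u1', ∑ x2', ∑ u2', p x1' u1' y x2' u2')
        = (∑ u1, ∑ x2', ∑ u2, p x1 u1 y x2' u2)
          * (∑ x1', ∑ u1', ∑ u2', p x1' u1' y x2 u2'))

include hM1 in
lemma fact1 (u1 : U1) (x1 : X1) (y : Y) :
    m1 p u1 x1 y * pX1 p x1 = pU1X1 p u1 x1 * pX1Y p x1 y :=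
  calc m1 p u1 x1 y * pX1 p x1
      = ∑ x2, ∑ u2, p x1 u1 y x2 u2 * pX1 p x1 := by
        unfold m1; simp only [Finset.sum_mul]
    _ = ∑ x2, ∑ u2, pU1X1 p u1 x1 * (∑ u1', p x1 u1' y x2 u2) :=
        Finset.sum_congr rfl fun x2 _ => Finset.sum_congr rfl fun u2 _ => hM1 x1 u1 y x2 u2
    _ = pU1X1 p u1 x1 * ∑ x2, ∑ u2, ∑ u1', p x1 u1' y x2 u2 := by
        simp only [← Finset.mul_sum]
    _ = pU1X1 p u1 x1 * pX1Y p x1 y := by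
        rw [rot3inv (fun x2 u2 u1' => p x1 u1' y x2 u2)]; rfl

include hM2 in
lemma fact2 (u2 : U2) (x2 : X2) (y : Y) :
    m2 p u2 x2 y * pX2 p x2 = pU2X2 p u2 x2 * pX2Y p x2 y :=
  calc m2 p u2 x2 y * pX2 p x2
      = ∑ x1, ∑ u1, p x1 u1 y x2 u2 * pX2 p x2 := by
        unfold m2; simp only [Finset.sum_mul]
    _ = ∑ x1, ∑ u1, (∑ u2', p x1 u1 y x2 u2') * pU2X2 p u2 x2 :=
        Finset.sum_congr rfl fun x1 _ => Finset.sum_congr rfl fun u1 _ => hM2 x1 u1 y x2 u2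
    _ = (∑ x1, ∑ u1, ∑ u2', p x1 u1 y x2 u2') * pU2X2 p u2 x2 := by
        simp only [← Finset.sum_mul]
    _ = pU2X2 p u2 x2 * pX2Y p x2 y := mul_comm _ _

include hM1 hM2 hM3 in
lemma star (x1 : X1) (u1 : U1) (y : Y) (x2 : X2) (u2 : U2) :
    p x1 u1 y x2 u2 * (pX1 p x1 * pX2 p x2 * pY p y)
      = pU1X1 p u1 x1 * pU2X2 p u2 x2 * (pX1Y p x1 y * pX2Y p x2 y) := by
  have ha : (∑ u2', p x1 u1 y x2 u2') * pX1 p x1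
      = pU1X1 p u1 x1 * (∑ u1', ∑ u2', p x1 u1' y x2 u2') := by
    calc (∑ u2', p x1 u1 y x2 u2') * pX1 p x1
        = ∑ u2', p x1 u1 y x2 u2' * pX1 p x1 := Finset.sum_mul _ _ _
      _ = ∑ u2', pU1X1 p u1 x1 * (∑ u1', p x1 u1' y x2 u2') :=
          Finset.sum_congr rfl fun u2' _ => hM1 x1 u1 y x2 u2'
      _ = pU1X1 p u1 x1 * ∑ u2', ∑ u1', p x1 u1' y x2 u2' := (Finset.mul_sum _ _ _).symm
      _ = pU1X1 p u1 x1 * ∑ u1', ∑ u2', p x1 u1' y x2 u2' := by rw [Finset.sum_comm]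
  have hb : p x1 u1 y x2 u2 * pX2 p x2
      = (∑ u2', p x1 u1 y x2 u2') * pU2X2 p u2 x2 := hM2 x1 u1 y x2 u2
  have hc : (∑ u1', ∑ u2', p x1 u1' y x2 u2') * pY p y
      = pX1Y p x1 y * pX2Y p x2 y := hM3 x1 y x2
  calc p x1 u1 y x2 u2 * (pX1 p x1 * pX2 p x2 * pY p y)
      = (p x1 u1 y x2 u2 * pX2 p x2) * pX1 p x1 * pY p y := by ring
    _ = ((∑ u2', p x1 u1 y x2 u2') * pU2X2 p u2 x2) * pX1 p x1 * pY p y := by rw [hb]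
    _ = ((∑ u2', p x1 u1 y x2 u2') * pX1 p x1) * pU2X2 p u2 x2 * pY p y := by ring
    _ = (pU1X1 p u1 x1 * (∑ u1', ∑ u2', p x1 u1' y x2 u2')) * pU2X2 p u2 x2 * pY p y := by rw [ha]
    _ = pU1X1 p u1 x1 * pU2X2 p u2 x2 * ((∑ u1', ∑ u2', p x1 u1' y x2 u2') * pY p y) := by ring
    _ = _ := by rw [hc]

include hp0 hM1 hM2 hM3 in
lemma Lpt (x1 : X1) (u1 : U1) (y : Y) (x2 : X2) (u2 : U2) :
    p x1 u1 y x2 u2 * pY p y = m1 p u1 x1 y * m2 p u2 x2 y := by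
  by_cases h1 : pX1 p x1 = 0
  · have hz : ∀ u1' y' x2' u2', p x1 u1' y' x2' u2' = 0 := by
      intro u1' y' x2' u2'
      have hle := le_sum4 (fun u1' y' x2' u2' => p x1 u1' y' x2' u2')
        (fun a b c d => hp0 x1 a b c d) u1' y' x2' u2'
      rw [show (∑ a, ∑ b, ∑ c, ∑ d, p x1 a b c d) = pX1 p x1 from rfl, h1] at hle
      exact le_antisymm hle (hp0 _ _ _ _ _)
    have hm1 : m1 p u1 x1 y = 0 := by
      unfold m1; exact Finset.sum_eq_zero fun a _ => Finset.sum_eq_zero fun b _ => hz _ _ _ _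
    rw [hz u1 y x2 u2, hm1]; ring
  · by_cases h2 : pX2 p x2 = 0
    · have hz : ∀ x1' u1' y' u2', p x1' u1' y' x2 u2' = 0 := by
        intro x1' u1' y' u2'
        have hle := le_sum4 (fun x1' u1' y' u2' => p x1' u1' y' x2 u2')
          (fun a b c d => hp0 a b c x2 d) x1' u1' y' u2'
        rw [show (∑ a, ∑ b, ∑ c, ∑ d, p a b c x2 d) = pX2 p x2 from rfl, h2] at hle
        exact le_antisymm hle (hp0 _ _ _ _ _)
      have hm2 : m2 p u2 x2 y = 0 := by
        unfold m2; exact Finset.sum_eq_zero fun a _ => Finset.sum_eq_zero fun b _ => hz _ _ _ _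
      rw [hz x1 u1 y u2, hm2]; ring
    · apply mul_right_cancel₀ (mul_ne_zero h1 h2)
      calc p x1 u1 y x2 u2 * pY p y * (pX1 p x1 * pX2 p x2)
          = p x1 u1 y x2 u2 * (pX1 p x1 * pX2 p x2 * pY p y) := by ring
        _ = pU1X1 p u1 x1 * pU2X2 p u2 x2 * (pX1Y p x1 y * pX2Y p x2 y) :=
            star p hM1 hM2 hM3 x1 u1 y x2 u2
        _ = (pU1X1 p u1 x1 * pX1Y p x1 y) * (pU2X2 p u2 x2 * pX2Y p x2 y) := by ring
        _ = (m1 p u1 x1 y * pX1 p x1) * (m2 p u2 x2 y * pX2 p x2) := by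
            rw [fact1 p hM1, fact2 p hM2]
        _ = m1 p u1 x1 y * m2 p u2 x2 y * (pX1 p x1 * pX2 p x2) := by ring

include hp0 hM1 hM2 hM3 in
lemma fact3 (u1 : U1) (u2 : U2) (y : Y) :
    q12 p u1 u2 y * pY p y = pU1Y p u1 y * pU2Y p u2 y := by
  calc q12 p u1 u2 y * pY p y
      = ∑ x1, ∑ x2, p x1 u1 y x2 u2 * pY p y := by unfold q12; simp only [Finset.sum_mul]
    _ = ∑ x1, ∑ x2, m1 p u1 x1 y * m2 p u2 x2 y :=
        Finset.sum_congr rfl fun x1 _ => Finset.sum_congr rfl fun x2 _ =>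
          Lpt p hp0 hM1 hM2 hM3 x1 u1 y x2 u2
    _ = (∑ x1, m1 p u1 x1 y) * (∑ x2, m2 p u2 x2 y) := by
        rw [Finset.sum_mul_sum]
    _ = pU1Y p u1 y * pU2Y p u2 y := by
        congr 1
        show (∑ x2, ∑ x1', ∑ u1', p x1' u1' y x2 u2) = pU2Y p u2 y
        rw [rot3 (fun x2 x1 u1' => p x1 u1' y x2 u2)]; rfl

section pos
variable {x1 : X1} {u1 : U1} {y : Y} {x2 : X2} {u2 : U2}
variable (hpt : 0 < p x1 u1 y x2 u2)

include hp0 hpt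

lemma pos_m1 : 0 < m1 p u1 x1 y :=
  lt_of_lt_of_le hpt (le_sum2 (fun a b => p x1 u1 y a b) (fun a b => hp0 _ _ _ _ _) x2 u2)
lemma pos_m2 : 0 < m2 p u2 x2 y :=
  lt_of_lt_of_le hpt (le_sum2 (fun a b => p a b y x2 u2) (fun a b => hp0 _ _ _ _ _) x1 u1)
lemma pos_q12 : 0 < q12 p u1 u2 y :=
  lt_of_lt_of_le hpt (le_sum2 (fun a b => p a u1 y b u2) (fun a b => hp0 _ _ _ _ _) x1 x2)
lemma pos_pU1X1 : 0 < pU1X1 p u1 x1 :=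
  lt_of_lt_of_le hpt (le_sum3 (fun a b c => p x1 u1 a b c) (fun a b c => hp0 _ _ _ _ _) y x2 u2)
lemma pos_pU2X2 : 0 < pU2X2 p u2 x2 :=
  lt_of_lt_of_le hpt (le_sum3 (fun a b c => p a b c x2 u2) (fun a b c => hp0 _ _ _ _ _) x1 u1 y)
lemma pos_pU1U2 : 0 < pU1U2 p u1 u2 :=
  lt_of_lt_of_le hpt (le_sum3 (fun a b c => p a u1 b c u2) (fun a b c => hp0 _ _ _ _ _) x1 y x2)
lemma pos_pX1 : 0 < pX1 p x1 :=
  lt_of_lt_of_le hpt (le_sum4 (fun a b c d => p x1 a b c d) (fun a b c d => hp0 _ _ _ _ _) u1 y x2 u2)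
lemma pos_pX2 : 0 < pX2 p x2 :=
  lt_of_lt_of_le hpt (le_sum4 (fun a b c d => p a b c x2 d) (fun a b c d => hp0 _ _ _ _ _) x1 u1 y u2)
lemma pos_pY : 0 < pY p y :=
  lt_of_lt_of_le hpt (le_sum4 (fun a b c d => p a b y c d) (fun a b c d => hp0 _ _ _ _ _) x1 u1 x2 u2)
lemma pos_pU1 : 0 < pU1 p u1 :=
  lt_of_lt_of_le hpt (le_sum4 (fun a b c d => p a u1 b c d) (fun a b c d => hp0 _ _ _ _ _) x1 y x2 u2)
lemma pos_pU2 : 0 < pU2 p u2 :=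
  lt_of_lt_of_le hpt (le_sum4 (fun a b c d => p b c d a u2) (fun a b c d => hp0 _ _ _ _ _) x2 x1 u1 y)
lemma pos_pU1Y : 0 < pU1Y p u1 y :=
  lt_of_lt_of_le hpt (le_sum3 (fun a b c => p a u1 y b c) (fun a b c => hp0 _ _ _ _ _) x1 x2 u2)
lemma pos_pX1Y : 0 < pX1Y p x1 y :=
  lt_of_lt_of_le hpt (le_sum3 (fun a b c => p x1 a y b c) (fun a b c => hp0 _ _ _ _ _) u1 x2 u2)
lemma pos_pU2Y : 0 < pU2Y p u2 y :=
  lt_of_lt_of_le hpt (le_sum3 (fun a b c => p a b y c u2) (fun a b c => hp0 _ _ _ _ _) x1 u1 x2)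
lemma pos_pX2Y : 0 < pX2Y p x2 y :=
  lt_of_lt_of_le hpt (le_sum3 (fun a b c => p a b y x2 c) (fun a b c => hp0 _ _ _ _ _) x1 u1 u2)

end pos

include hp0 hM1 in
lemma P1 (u1 : U1) (x1 : X1) (y : Y) :
    m1 p u1 x1 y * Real.log (pY p y * m1 p u1 x1 y / (pU1Y p u1 y * pX1Y p x1 y))
      = m1 p u1 x1 y * Real.log (pU1X1 p u1 x1 / (pU1 p u1 * pX1 p x1))
        + m1 p u1 x1 y * Real.log (pU1 p u1 * pY p y / pU1Y p u1 y) := by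
  have hm0 : 0 ≤ m1 p u1 x1 y :=
    Finset.sum_nonneg fun a _ => Finset.sum_nonneg fun b _ => hp0 _ _ _ _ _
  rcases hm0.eq_or_lt with h | h
  · rw [← h]; ring
  · obtain ⟨x2, u2, hpt⟩ := exists_pos_of_sum2 (fun a b => p x1 u1 y a b)
      (fun a b => hp0 _ _ _ _ _) h
    have hY := pos_pY p hp0 hpt
    have hU1Y := pos_pU1Y p hp0 hpt
    have hX1Y := pos_pX1Y p hp0 hpt
    have hUX := pos_pU1X1 p hp0 hpt
    have hU1 := pos_pU1 p hp0 hpt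
    have hX1 := pos_pX1 p hp0 hpt
    have hlog : Real.log (m1 p u1 x1 y) + Real.log (pX1 p x1)
        = Real.log (pU1X1 p u1 x1) + Real.log (pX1Y p x1 y) := by
      rw [← Real.log_mul h.ne' hX1.ne', fact1 p hM1, Real.log_mul hUX.ne' hX1Y.ne']
    rw [← mul_add]
    congr 1
    rw [Real.log_div (mul_ne_zero hY.ne' h.ne') (mul_ne_zero hU1Y.ne' hX1Y.ne'),
      Real.log_mul hY.ne' h.ne', Real.log_mul hU1Y.ne' hX1Y.ne',
      Real.log_div hUX.ne' (mul_ne_zero hU1.ne' hX1.ne'),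
      Real.log_mul hU1.ne' hX1.ne',
      Real.log_div (mul_ne_zero hU1.ne' hY.ne') hU1Y.ne',
      Real.log_mul hU1.ne' hY.ne']
    linarith

include hp0 hM2 in
lemma P2 (u2 : U2) (x2 : X2) (y : Y) :
    m2 p u2 x2 y * Real.log (pY p y * m2 p u2 x2 y / (pU2Y p u2 y * pX2Y p x2 y))
      = m2 p u2 x2 y * Real.log (pU2X2 p u2 x2 / (pU2 p u2 * pX2 p x2))
        + m2 p u2 x2 y * Real.log (pU2 p u2 * pY p y / pU2Y p u2 y) := by
  have hm0 : 0 ≤ m2 p u2 x2 y :=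
    Finset.sum_nonneg fun a _ => Finset.sum_nonneg fun b _ => hp0 _ _ _ _ _
  rcases hm0.eq_or_lt with h | h
  · rw [← h]; ring
  · obtain ⟨x1, u1, hpt⟩ := exists_pos_of_sum2 (fun a b => p a b y x2 u2)
      (fun a b => hp0 _ _ _ _ _) h
    have hY := pos_pY p hp0 hpt
    have hU2Y := pos_pU2Y p hp0 hpt
    have hX2Y := pos_pX2Y p hp0 hpt
    have hUX := pos_pU2X2 p hp0 hpt
    have hU2 := pos_pU2 p hp0 hpt
    have hX2 := pos_pX2 p hp0 hpt
    have hlog : Real.log (m2 p u2 x2 y) + Real.log (pX2 p x2)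
        = Real.log (pU2X2 p u2 x2) + Real.log (pX2Y p x2 y) := by
      rw [← Real.log_mul h.ne' hX2.ne', fact2 p hM2, Real.log_mul hUX.ne' hX2Y.ne']
    rw [← mul_add]
    congr 1
    rw [Real.log_div (mul_ne_zero hY.ne' h.ne') (mul_ne_zero hU2Y.ne' hX2Y.ne'),
      Real.log_mul hY.ne' h.ne', Real.log_mul hU2Y.ne' hX2Y.ne',
      Real.log_div hUX.ne' (mul_ne_zero hU2.ne' hX2.ne'),
      Real.log_mul hU2.ne' hX2.ne',
      Real.log_div (mul_ne_zero hU2.ne' hY.ne') hU2Y.ne',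
      Real.log_mul hU2.ne' hY.ne']
    linarith

include hp0 hM1 hM2 hM3 in
lemma P3 (u1 : U1) (u2 : U2) (y : Y) :
    q12 p u1 u2 y * Real.log (q12 p u1 u2 y / (pU1U2 p u1 u2 * pY p y))
      = q12 p u1 u2 y * Real.log (pU1Y p u1 y / (pU1 p u1 * pY p y))
        + q12 p u1 u2 y * Real.log (pU2Y p u2 y / (pU2 p u2 * pY p y))
        - q12 p u1 u2 y * Real.log (pU1U2 p u1 u2 / (pU1 p u1 * pU2 p u2)) := by
  have hm0 : 0 ≤ q12 p u1 u2 y :=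
    Finset.sum_nonneg fun a _ => Finset.sum_nonneg fun b _ => hp0 _ _ _ _ _
  rcases hm0.eq_or_lt with h | h
  · rw [← h]; ring
  · obtain ⟨x1, x2, hpt⟩ := exists_pos_of_sum2 (fun a b => p a u1 y b u2)
      (fun a b => hp0 _ _ _ _ _) h
    have hY := pos_pY p hp0 hpt
    have hU1Y := pos_pU1Y p hp0 hpt
    have hU2Y := pos_pU2Y p hp0 hpt
    have hUU := pos_pU1U2 p hp0 hpt
    have hU1 := pos_pU1 p hp0 hpt
    have hU2 := pos_pU2 p hp0 hpt
    have hlog : Real.log (q12 p u1 u2 y) + Real.log (pY p y)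
        = Real.log (pU1Y p u1 y) + Real.log (pU2Y p u2 y) := by
      rw [← Real.log_mul h.ne' hY.ne', fact3 p hp0 hM1 hM2 hM3,
        Real.log_mul hU1Y.ne' hU2Y.ne']
    rw [← mul_add, ← mul_sub]
    congr 1
    rw [Real.log_div h.ne' (mul_ne_zero hUU.ne' hY.ne'),
      Real.log_mul hUU.ne' hY.ne',
      Real.log_div hU1Y.ne' (mul_ne_zero hU1.ne' hY.ne'),
      Real.log_mul hU1.ne' hY.ne',
      Real.log_div hU2Y.ne' (mul_ne_zero hU2.ne' hY.ne'),
      Real.log_mul hU2.ne' hY.ne',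
      Real.log_div hUU.ne' (mul_ne_zero hU1.ne' hU2.ne'),
      Real.log_mul hU1.ne' hU2.ne']
    linarith

include hp0 hM1 in
lemma hT1 : cmi (fun u1 x1 y => ∑ x2, ∑ u2, p x1 u1 y x2 u2)
    = (∑ u1, ∑ x1, pU1X1 p u1 x1 * Real.log (pU1X1 p u1 x1 / (pU1 p u1 * pX1 p x1)))
      + ∑ u1, ∑ y, pU1Y p u1 y * Real.log (pU1 p u1 * pY p y / pU1Y p u1 y) := by
  have step1 : cmi (fun u1 x1 y => ∑ x2, ∑ u2, p x1 u1 y x2 u2)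
      = ∑ u1, ∑ x1, ∑ y, m1 p u1 x1 y
          * Real.log (pY p y * m1 p u1 x1 y / (pU1Y p u1 y * pX1Y p x1 y)) := by
    simp only [cmi]
    refine Finset.sum_congr rfl fun u1 _ => Finset.sum_congr rfl fun x1 _ =>
      Finset.sum_congr rfl fun y _ => ?_
    have hy : (∑ u1', ∑ x1', ∑ x2, ∑ u2, p x1' u1' y x2 u2) = pY p y := by
      unfold pY; exact sw4_01 (fun a b c d => p b a y c d)
    rw [hy]
    rfl
  rw [step1]
  have step2 : ∀ u1 ∈ (univ : Finset U1), ∀ x1 ∈ (univ : Finset X1), ∀ y ∈ (univ : Finset Y),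
      m1 p u1 x1 y * Real.log (pY p y * m1 p u1 x1 y / (pU1Y p u1 y * pX1Y p x1 y))
        = m1 p u1 x1 y * Real.log (pU1X1 p u1 x1 / (pU1 p u1 * pX1 p x1))
          + m1 p u1 x1 y * Real.log (pU1 p u1 * pY p y / pU1Y p u1 y) :=
    fun u1 _ x1 _ y _ => P1 p hp0 hM1 u1 x1 y
  rw [Finset.sum_congr rfl fun u1 h1 => Finset.sum_congr rfl fun x1 h2 =>
    Finset.sum_congr rfl fun y h3 => step2 u1 h1 x1 h2 y h3]
  simp only [Finset.sum_add_distrib]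
  congr 1
  · refine Finset.sum_congr rfl fun u1 _ => Finset.sum_congr rfl fun x1 _ => ?_
    rw [← Finset.sum_mul]
    rfl
  · rw [sw3_12 (fun u1 x1 y => m1 p u1 x1 y * Real.log (pU1 p u1 * pY p y / pU1Y p u1 y))]
    refine Finset.sum_congr rfl fun u1 _ => Finset.sum_congr rfl fun y _ => ?_
    rw [← Finset.sum_mul]
    rfl

include hp0 hM2 in
lemma hT2 : cmi (fun u2 x2 y => ∑ x1, ∑ u1, p x1 u1 y x2 u2)
    = (∑ u2, ∑ x2, pU2X2 p u2 x2 * Real.log (pU2X2 p u2 x2 / (pU2 p u2 * pX2 p x2)))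
      + ∑ u2, ∑ y, pU2Y p u2 y * Real.log (pU2 p u2 * pY p y / pU2Y p u2 y) := by
  have step1 : cmi (fun u2 x2 y => ∑ x1, ∑ u1, p x1 u1 y x2 u2)
      = ∑ u2, ∑ x2, ∑ y, m2 p u2 x2 y
          * Real.log (pY p y * m2 p u2 x2 y / (pU2Y p u2 y * pX2Y p x2 y)) := by
    simp only [cmi]
    refine Finset.sum_congr rfl fun u2 _ => Finset.sum_congr rfl fun x2 _ =>
      Finset.sum_congr rfl fun y _ => ?_
    have h1 : (∑ u2', ∑ x2', ∑ x1, ∑ u1, p x1 u1 y x2' u2') = pY p y := by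
      unfold pY; exact perm4A (fun a b c d => p c d y b a)
    have h2 : (∑ x2', ∑ x1, ∑ u1, p x1 u1 y x2' u2) = pU2Y p u2 y := by
      unfold pU2Y; exact rot3 (fun a b c => p b c y a u2)
    have h3 : (∑ u2', ∑ x1, ∑ u1, p x1 u1 y x2 u2') = pX2Y p x2 y := by
      unfold pX2Y; exact rot3 (fun a b c => p b c y x2 a)
    rw [h1, h2, h3]
    rfl
  rw [step1]
  have hy2 : ∀ u2 x2, (∑ y, m2 p u2 x2 y) = pU2X2 p u2 x2 := by
    intro u2 x2; unfold m2 pU2X2; exact rot3 (fun a b c => p b c a x2 u2)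
  have hx2 : ∀ u2 y, (∑ x2, m2 p u2 x2 y) = pU2Y p u2 y := by
    intro u2 y; unfold m2 pU2Y; exact rot3 (fun a b c => p b c y a u2)
  rw [Finset.sum_congr rfl fun u2 (h1 : u2 ∈ univ) => Finset.sum_congr rfl fun x2 _ =>
    Finset.sum_congr rfl fun y _ => P2 p hp0 hM2 u2 x2 y]
  simp only [Finset.sum_add_distrib]
  congr 1
  · refine Finset.sum_congr rfl fun u2 _ => Finset.sum_congr rfl fun x2 _ => ?_
    rw [← Finset.sum_mul, hy2]
  · rw [sw3_12 (fun u2 x2 y => m2 p u2 x2 y * Real.log (pU2 p u2 * pY p y / pU2Y p u2 y))]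
    refine Finset.sum_congr rfl fun u2 _ => Finset.sum_congr rfl fun y _ => ?_
    rw [← Finset.sum_mul, hx2]

include hp0 hM1 hM2 hM3 in
lemma hT3 : mi2 (fun (uu : U1 × U2) y => ∑ x1, ∑ x2, p x1 uu.1 y x2 uu.2)
    = (∑ u1, ∑ y, pU1Y p u1 y * Real.log (pU1Y p u1 y / (pU1 p u1 * pY p y)))
      + (∑ u2, ∑ y, pU2Y p u2 y * Real.log (pU2Y p u2 y / (pU2 p u2 * pY p y)))
      - ∑ u1, ∑ u2, pU1U2 p u1 u2 * Real.log (pU1U2 p u1 u2 / (pU1 p u1 * pU2 p u2)) := by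
  have step1 : mi2 (fun (uu : U1 × U2) y => ∑ x1, ∑ x2, p x1 uu.1 y x2 uu.2)
      = ∑ u1, ∑ u2, ∑ y, q12 p u1 u2 y
          * Real.log (q12 p u1 u2 y / (pU1U2 p u1 u2 * pY p y)) := by
    simp only [mi2, Fintype.sum_prod_type]
    refine Finset.sum_congr rfl fun u1 _ => Finset.sum_congr rfl fun u2 _ =>
      Finset.sum_congr rfl fun y _ => ?_
    have h1 : (∑ y', ∑ x1, ∑ x2, p x1 u1 y' x2 u2) = pU1U2 p u1 u2 := by
      unfold pU1U2; exact sw3_01 (fun a b c => p b u1 a c u2)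
    have h2 : (∑ u1', ∑ u2', ∑ x1, ∑ x2, p x1 u1' y x2 u2') = pY p y := by
      unfold pY; exact perm4B (fun a b c d => p c a y d b)
    rw [h1, h2]
    rfl
  rw [step1]
  rw [Finset.sum_congr rfl fun u1 (h1 : u1 ∈ univ) => Finset.sum_congr rfl fun u2 _ =>
    Finset.sum_congr rfl fun y _ => P3 p hp0 hM1 hM2 hM3 u1 u2 y]
  simp only [Finset.sum_add_distrib, Finset.sum_sub_distrib]
  congr 1
  · congr 1
    · refine Finset.sum_congr rfl fun u1 _ => ?_
      rw [Finset.sum_comm]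
      refine Finset.sum_congr rfl fun y _ => ?_
      rw [← Finset.sum_mul]
      congr 1
      unfold q12 pU1Y
      exact rot3 (fun a b c => p b u1 y c a)
    · rw [rot3 (fun u1 u2 y => q12 p u1 u2 y
        * Real.log (pU2Y p u2 y / (pU2 p u2 * pY p y)))]
      refine Finset.sum_congr rfl fun u2 _ => Finset.sum_congr rfl fun y _ => ?_
      rw [← Finset.sum_mul]
      congr 1
      unfold q12 pU2Y
      exact sw3_01 (fun a b c => p b a y c u2)
  · refine Finset.sum_congr rfl fun u1 _ => Finset.sum_congr rfl fun u2 _ => ?_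
    rw [← Finset.sum_mul]
    congr 1
    unfold q12 pU1U2
    exact sw3_01 (fun a b c => p b u1 a c u2)

lemma hT4 : mi2 (fun u1 x1 => ∑ y, ∑ x2, ∑ u2, p x1 u1 y x2 u2)
    = ∑ u1, ∑ x1, pU1X1 p u1 x1
        * Real.log (pU1X1 p u1 x1 / (pU1 p u1 * pX1 p x1)) := rfl

lemma hT5 : mi2 (fun u2 x2 => ∑ x1, ∑ u1, ∑ y, p x1 u1 y x2 u2)
    = ∑ u2, ∑ x2, pU2X2 p u2 x2
        * Real.log (pU2X2 p u2 x2 / (pU2 p u2 * pX2 p x2)) := by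
  simp only [mi2]
  refine Finset.sum_congr rfl fun u2 _ => Finset.sum_congr rfl fun x2 _ => ?_
  have h1 : (∑ u2', ∑ x1, ∑ u1, ∑ y, p x1 u1 y x2 u2') = pX2 p x2 := by
    unfold pX2; exact rot4 (fun a b c d => p b c d x2 a)
  rw [h1]
  rfl

lemma hT6 : mi2 (fun u1 u2 => ∑ x1, ∑ y, ∑ x2, p x1 u1 y x2 u2)
    = ∑ u1, ∑ u2, pU1U2 p u1 u2
        * Real.log (pU1U2 p u1 u2 / (pU1 p u1 * pU2 p u2)) := by
  simp only [mi2]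
  refine Finset.sum_congr rfl fun u1 _ => Finset.sum_congr rfl fun u2 _ => ?_
  have h1 : (∑ u2', ∑ x1, ∑ y, ∑ x2, p x1 u1 y x2 u2') = pU1 p u1 := by
    unfold pU1; exact rot4 (fun a b c d => p b u1 c d a)
  have h2 : (∑ u1', ∑ x1, ∑ y, ∑ x2, p x1 u1' y x2 u2) = pU2 p u2 := by
    unfold pU2; exact perm4C (fun a b c d => p b a c d u2)
  rw [h1, h2]
  rfl

end facts
end DIB

/-- Under the Markov chain `U₁ ↔ X₁ ↔ Y ↔ X₂ ↔ U₂`,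
`I(U₁;X₁|Y) + I(U₂;X₂|Y) + I(U₁,U₂;Y) = I(U₁;X₁) + I(U₂;X₂) − I(U₁;U₂)`. -/
theorem distributed_IB_sum_rate_identity
    {X1 U1 Y X2 U2 : Type*} [Fintype X1] [Fintype U1] [Fintype Y] [Fintype X2] [Fintype U2]
    (p : X1 → U1 → Y → X2 → U2 → ℝ)
    (hp0 : ∀ x1 u1 y x2 u2, 0 ≤ p x1 u1 y x2 u2)
    (hp1 : ∑ x1, ∑ u1, ∑ y, ∑ x2, ∑ u2, p x1 u1 y x2 u2 = 1)
    -- `U₁ ⊥ (Y, X₂, U₂) | X₁` :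
    (hM1 : ∀ x1 u1 y x2 u2,
      p x1 u1 y x2 u2 * (∑ u1', ∑ y', ∑ x2', ∑ u2', p x1 u1' y' x2' u2')
        = (∑ y', ∑ x2', ∑ u2', p x1 u1 y' x2' u2') * (∑ u1', p x1 u1' y x2 u2))
    -- `U₂ ⊥ (Y, X₁, U₁) | X₂` :
    (hM2 : ∀ x1 u1 y x2 u2,
      p x1 u1 y x2 u2 * (∑ x1', ∑ u1', ∑ y', ∑ u2', p x1' u1' y' x2 u2')
        = (∑ u2', p x1 u1 y x2 u2') * (∑ x1', ∑ u1', ∑ y', p x1' u1' y' x2 u2))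
    -- `X₁ ⊥ X₂ | Y` :
    (hM3 : ∀ x1 y x2,
      (∑ u1, ∑ u2, p x1 u1 y x2 u2)
          * (∑ x1', ∑ u1', ∑ x2', ∑ u2', p x1' u1' y x2' u2')
        = (∑ u1, ∑ x2', ∑ u2, p x1 u1 y x2' u2)
          * (∑ x1', ∑ u1', ∑ u2', p x1' u1' y x2 u2')) :
    cmi (fun u1 x1 y => ∑ x2, ∑ u2, p x1 u1 y x2 u2)
      + cmi (fun u2 x2 y => ∑ x1, ∑ u1, p x1 u1 y x2 u2)
      + mi2 (fun (uu : U1 × U2) y => ∑ x1, ∑ x2, p x1 uu.1 y x2 uu.2)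
    = mi2 (fun u1 x1 => ∑ y, ∑ x2, ∑ u2, p x1 u1 y x2 u2)
      + mi2 (fun u2 x2 => ∑ x1, ∑ u1, ∑ y, p x1 u1 y x2 u2)
      - mi2 (fun u1 u2 => ∑ x1, ∑ y, ∑ x2, p x1 u1 y x2 u2) := by
  rw [DIB.hT1 p hp0 hM1, DIB.hT2 p hp0 hM2, DIB.hT3 p hp0 hM1 hM2 hM3,
    DIB.hT4 p, DIB.hT5 p, DIB.hT6 p]
  have c1 : (∑ u1, ∑ y, DIB.pU1Y p u1 y
        * Real.log (DIB.pU1 p u1 * DIB.pY p y / DIB.pU1Y p u1 y))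
      + (∑ u1, ∑ y, DIB.pU1Y p u1 y
        * Real.log (DIB.pU1Y p u1 y / (DIB.pU1 p u1 * DIB.pY p y))) = 0 := by
    rw [← Finset.sum_add_distrib]
    refine Finset.sum_eq_zero fun u1 _ => ?_
    rw [← Finset.sum_add_distrib]
    refine Finset.sum_eq_zero fun y _ => ?_
    have h := Real.log_inv (DIB.pU1Y p u1 y / (DIB.pU1 p u1 * DIB.pY p y))
    rw [inv_div] at h
    rw [h]; ring
  have c2 : (∑ u2, ∑ y, DIB.pU2Y p u2 y
        * Real.log (DIB.pU2 p u2 * DIB.pY p y / DIB.pU2Y p u2 y))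
      + (∑ u2, ∑ y, DIB.pU2Y p u2 y
        * Real.log (DIB.pU2Y p u2 y / (DIB.pU2 p u2 * DIB.pY p y))) = 0 := by
    rw [← Finset.sum_add_distrib]
    refine Finset.sum_eq_zero fun u2 _ => ?_
    rw [← Finset.sum_add_distrib]
    refine Finset.sum_eq_zero fun y _ => ?_
    have h := Real.log_inv (DIB.pU2Y p u2 y / (DIB.pU2 p u2 * DIB.pY p y))
    rw [inv_div] at h
    rw [h]; ring
  linarith
end
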